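/- Let H be a Hopf algebra and A a left H-module algebra and H-module coalgebra via an action ▷. If the Haar integral Λ ∈ A exists, then Λ is H-invariant: h ▷ Λ = ε(h)·Λ for all h ∈ H. -/

import Mathlib

/-! Right integrals `x` (those with `x * b = ε(b) • x` for all `b`) are carried to right integrals
by the action, because of the smash-product identity `(h ▷ x) a = ∑ h₁ ▷ (x (S h₂ ▷ a))`, which
holds as `h ↦ (S h ▷ ·)` is the convolution inverse of `h ↦ (h ▷ ·)`. Applying this to `x = Λ` and
multiplying by `Λ` on the right gives `ε(Λ) (h ▷ Λ) = (h ▷ Λ) Λ = ε(h ▷ Λ) Λ = ε(h) ε(Λ) Λ`,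
and `Λ = Λ Λ = ε(Λ) Λ` turns this into `h ▷ Λ = ε(h) Λ`. -/

open TensorProduct Coalgebra

noncomputable section

/-- Given an action `act : H →ₗ (A →ₗ A)`, the induced "diagonal" operator
`act2 act h = ∑ (h₍₁₎ ▷ ·) ⊗ (h₍₂₎ ▷ ·)` on `A ⊗ A`. -/
def act2 {H A : Type*} [Ring H] [Ring A] [HopfAlgebra ℂ H] [HopfAlgebra ℂ A]
    (act : H →ₗ[ℂ] A →ₗ[ℂ] A) : H →ₗ[ℂ] (A ⊗[ℂ] A →ₗ[ℂ] A ⊗[ℂ] A) :=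
  (TensorProduct.homTensorHomMap (RingHom.id ℂ) A A A A) ∘ₗ (TensorProduct.map act act) ∘ₗ
    (comul : H →ₗ[ℂ] H ⊗[ℂ] H)

open WithConv HopfAlgebra

theorem Coalgebra.sum_counit_right_smul {R C ι : Type*} [CommSemiring R] [AddCommMonoid C]
    [Module R C] [Coalgebra R C] {c : C} (𝓡 : Repr R c ι) :
    ∑ i ∈ 𝓡.index, counit (R := R) (𝓡.right i) • 𝓡.left i = c := by
  simpa only [map_sum, lift.tmul, LinearMap.flip_apply, LinearMap.lsmul_apply, one_smul]
    using congr(TensorProduct.lift (LinearMap.lsmul R C).flip $(sum_tmul_counit_eq 𝓡))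

theorem AlgHom.convMul_comp_antipode {R H B : Type*} [CommSemiring R] [Semiring H]
    [HopfAlgebra R H] [Semiring B] [Algebra R B] (φ : H →ₐ[R] B) :
    toConv φ.toLinearMap * toConv (φ.toLinearMap ∘ₗ antipode R) = 1 := by
  have := LinearMap.algHom_comp_convMul_distrib φ (toConv .id) (toConv (antipode R))
  rw [LinearMap.id_mul_antipode, LinearMap.comp_id] at this
  rw [← toConv_ofConv (_ * _), ← this]
  ext
  simp

section ModuleAlgebra

variable {R H A : Type*} [CommSemiring R] [Semiring H] [HopfAlgebra R H] [Semiring A]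
  [Algebra R A] (φ : H →ₐ[R] Module.End R A)

/-- `h ▷ (a * b) = ∑ (h₁ ▷ a) (h₂ ▷ b)`, written in the convolution algebra of maps `H → A`. -/
def IsModuleAlgebra : Prop :=
  ∀ a b : A, toConv (φ.toLinearMap.flip (a * b)) =
    toConv (φ.toLinearMap.flip a) * toConv (φ.toLinearMap.flip b)

theorem compl₂_mulLeft_eq_convMul (hmul : IsModuleAlgebra φ) (x : A) :
    toConv (φ.toLinearMap.compl₂ (LinearMap.mulLeft R x)) =
      toConv (LinearMap.mul R A ∘ₗ φ.toLinearMap.flip x) * toConv φ.toLinearMap := by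
  ext h y
  have := congr($(hmul x y) h)
  simp only [(ℛ R h).convMul_apply] at this ⊢
  simpa [LinearMap.sum_apply] using this

theorem act_mul_eq_sum_act_mul_act_antipode (hmul : IsModuleAlgebra φ) (x a : A) {h : H} {ι : Type*} (𝓡 : Repr R h ι) :
    φ h x * a = ∑ i ∈ 𝓡.index, φ (𝓡.left i) (x * φ (antipode R (𝓡.right i)) a) := by
  have hconv : toConv (φ.toLinearMap.compl₂ (LinearMap.mulLeft R x)) *
      toConv (φ.toLinearMap ∘ₗ antipode R) =
        toConv (LinearMap.mul R A ∘ₗ φ.toLinearMap.flip x) := by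
    rw [compl₂_mulLeft_eq_convMul φ hmul, mul_assoc, φ.convMul_comp_antipode, mul_one]
  have := congr($hconv h a)
  simp only [𝓡.convMul_apply, LinearMap.sum_apply] at this
  simpa using this.symm

theorem act_mul_of_mul_eq_counit_smul [CoalgebraStruct R A] (hmul : IsModuleAlgebra φ)
    (hcounit : ∀ (h : H) (a : A), counit (R := R) (φ h a) = counit (R := R) h * counit (R := R) a)
    {x : A} (hx : ∀ b : A, x * b = counit (R := R) b • x) (h : H) (a : A) :
    φ h x * a = counit (R := R) a • φ h x := by
  let 𝓡 := ℛ R h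
  calc φ h x * a
      = ∑ i ∈ 𝓡.index, φ (𝓡.left i) (x * φ (antipode R (𝓡.right i)) a) :=
        act_mul_eq_sum_act_mul_act_antipode φ hmul x a 𝓡
    _ = ∑ i ∈ 𝓡.index, counit (R := R) a • φ (counit (R := R) (𝓡.right i) • 𝓡.left i) x := by
        simp [hx, hcounit, smul_smul, mul_comm]
    _ = counit (R := R) a • φ h x := by
        rw [← Finset.smul_sum, ← LinearMap.sum_apply, ← map_sum, sum_counit_right_smul]

end ModuleAlgebra

theorem isModuleAlgebra_of_act2 {H A : Type*} [Ring H] [Ring A] [HopfAlgebra ℂ H]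
    [HopfAlgebra ℂ A] (φ : H →ₐ[ℂ] Module.End ℂ A)
    (modalg_mul : ∀ (h : H) (a b : A),
      φ h (a * b) = LinearMap.mul' ℂ A (act2 φ.toLinearMap h (a ⊗ₜ[ℂ] b))) :
    IsModuleAlgebra φ := by
  intro a b
  ext h
  simp [modalg_mul, act2, ← (ℛ ℂ h).eq, (ℛ ℂ h).convMul_apply]

theorem stmt5_general {H A : Type*} [Ring H] [Ring A] [HopfAlgebra ℂ H] [HopfAlgebra ℂ A]
    (act : H →ₗ[ℂ] A →ₗ[ℂ] A)
    -- `act` is a left action of the algebra `H`: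
    (act_mul : ∀ (h k : H) (a : A), act (h * k) a = act h (act k a))
    (act_one : ∀ a : A, act 1 a = a)
    -- `A` is an `H`-module algebra:
    (modalg_mul : ∀ (h : H) (a b : A),
      act h (a * b) = LinearMap.mul' ℂ A (act2 act h (a ⊗ₜ[ℂ] b)))
    -- `A` is an `H`-module coalgebra:
    (modcoalg_counit : ∀ (h : H) (a : A),
      counit (R := ℂ) (act h a) = counit (R := ℂ) h * counit (R := ℂ) a)
    -- the Haar integral of `A`:
    (Λ : A) (hidem : Λ * Λ = Λ)
    (hleft : ∀ a : A, a * Λ = counit (R := ℂ) a • Λ)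
    (hright : ∀ a : A, Λ * a = counit (R := ℂ) a • Λ) :
    ∀ h : H, act h Λ = counit (R := ℂ) h • Λ := by
  intro h
  let φ : H →ₐ[ℂ] Module.End ℂ A :=
    .ofLinearMap act (LinearMap.ext act_one) fun h k ↦ LinearMap.ext (act_mul h k)
  have hΛ : counit (R := ℂ) Λ • Λ = Λ := by rw [← hleft, hidem]
  calc act h Λ
      = counit (R := ℂ) Λ • act h Λ := by rw [← map_smul, hΛ]
    _ = act h Λ * Λ :=
        (act_mul_of_mul_eq_counit_smul φ (isModuleAlgebra_of_act2 φ modalg_mul) modcoalg_counit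
          hright h Λ).symm
    _ = counit (R := ℂ) h • Λ := by rw [hleft, modcoalg_counit, mul_smul, hΛ]

/-- Let `H` be a Hopf algebra and `A` a left `H`-module algebra and
`H`-module coalgebra via `▷`.  If the Haar integral `Λ ∈ A` exists, then `Λ` is
`H`-invariant: `h ▷ Λ = ε(h) • Λ` for all `h ∈ H`. -/
theorem stmt5 {H A : Type*} [Ring H] [Ring A] [HopfAlgebra ℂ H] [HopfAlgebra ℂ A]
    [FiniteDimensional ℂ H] [FiniteDimensional ℂ A]
    (act : H →ₗ[ℂ] A →ₗ[ℂ] A)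
    -- `act` is a left action of the algebra `H`:
    (act_mul : ∀ (h k : H) (a : A), act (h * k) a = act h (act k a))
    (act_one : ∀ a : A, act 1 a = a)
    -- `A` is an `H`-module algebra:
    (modalg_mul : ∀ (h : H) (a b : A),
      act h (a * b) = LinearMap.mul' ℂ A (act2 act h (a ⊗ₜ[ℂ] b)))
    (modalg_one : ∀ h : H, act h 1 = counit (R := ℂ) h • (1 : A))
    -- `A` is an `H`-module coalgebra:
    (modcoalg_comul : ∀ (h : H) (a : A),
      comul (R := ℂ) (act h a) = act2 act h (comul (R := ℂ) a))
    (modcoalg_counit : ∀ (h : H) (a : A),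
      counit (R := ℂ) (act h a) = counit (R := ℂ) h * counit (R := ℂ) a)
    -- the Haar integral of `A`:
    (Λ : A) (hidem : Λ * Λ = Λ)
    (hleft : ∀ a : A, a * Λ = counit (R := ℂ) a • Λ)
    (hright : ∀ a : A, Λ * a = counit (R := ℂ) a • Λ) :
    ∀ h : H, act h Λ = counit (R := ℂ) h • Λ :=
  stmt5_general act act_mul act_one modalg_mul modcoalg_counit Λ hidem hleft hright

end
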